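/- arXiv:2605.23379 — 2 statements merged into one kernel-verified Lean document; each statement's English description precedes it below -/
import Mathlib

section
/- Let T be a finite tree with at least one edge, v a vertex of T with degree d = d_T(v), and T' the tree obtained from T by attaching one new pendant edge at v. Let f : E(T) → ℝ be a unit vector (⟨f,f⟩ = 1) with A_v(f) = Σ_{e ∋ v} f_e² > 0, set μ = ⟨f, R_T f⟩ and ρ_v = S_v(f)²/A_v(f) where S_v(f) = Σ_{e ∋ v} f_e, and assume μ ≥ −1. If 2(d + 2 + μ(d+1)) ≥ ρ_v (2 + μ(d+1)), then there exists y ∈ ℝ such that ⟨f_y, R_{T'} f_y⟩ / ⟨f_y, f_y⟩ ≥ μ, where f_y is the extension of f to E(T') taking the value y on the new edge. -/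
open SimpleGraph Matrix Finset

/-- The largest eigenvalue of a real matrix, defined as the supremum of its set of
real eigenvalues. -/
noncomputable def lambdaMax {n : Type*} [Fintype n] (M : Matrix n n ℝ) : ℝ :=
  sSup {μ : ℝ | ∃ x : n → ℝ, x ≠ 0 ∧ M.mulVec x = μ • x}

/-- The Ricci matrix of a graph: `(R)_{e,e} = -(1/d_x + 1/d_y)` for `e = {x,y}`,
`(R)_{e,e'} = 1/d_z` for distinct edges sharing the endpoint `z`, and `0` for
disjoint edges. -/
noncomputable def ricciMatrix {V : Type*} [Fintype V] [DecidableEq V]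
    (G : SimpleGraph V) [DecidableRel G.Adj] :
    Matrix G.edgeSet G.edgeSet ℝ := fun e e' =>
  (if e = e' then (-1 : ℝ) else 1) *
    ∑ z : V, (if z ∈ (e : Sym2 V) ∧ z ∈ (e' : Sym2 V) then ((G.degree z : ℝ))⁻¹ else 0)

/-- Adjacency for the tree obtained by attaching `k` new pendant vertices at `v`. -/
def addLeavesAdj {V : Type*} (G : SimpleGraph V) (v : V) (k : ℕ) :
    V ⊕ Fin k → V ⊕ Fin k → Prop
  | Sum.inl x, Sum.inl y => G.Adj x y
  | Sum.inl x, Sum.inr _ => x = v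
  | Sum.inr _, Sum.inl y => y = v
  | Sum.inr _, Sum.inr _ => False

/-- The tree obtained from `G` by attaching `k` new pendant edges at `v`:
`k` new vertices `Sum.inr i`, each joined to `v` by a new edge. -/
def addLeaves {V : Type*} (G : SimpleGraph V) (v : V) (k : ℕ) :
    SimpleGraph (V ⊕ Fin k) where
  Adj := addLeavesAdj G v k
  symm := by
    constructor
    intro a b h
    cases a <;> cases b <;> simp_all [addLeavesAdj] <;> exact h.symm
  loopless := by
    constructor
    intro a
    cases a <;> simp [addLeavesAdj]

instance {V : Type*} [DecidableEq V] (G : SimpleGraph V) [DecidableRel G.Adj]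
    (v : V) (k : ℕ) : DecidableRel (addLeaves G v k).Adj := fun a b =>
  match a, b with
  | Sum.inl x, Sum.inl y => inferInstanceAs (Decidable (G.Adj x y))
  | Sum.inl x, Sum.inr _ => inferInstanceAs (Decidable (x = v))
  | Sum.inr _, Sum.inl y => inferInstanceAs (Decidable (y = v))
  | Sum.inr _, Sum.inr _ => inferInstanceAs (Decidable False)

/-- The extension `f_y` of an edge function `f` on `G` to `addLeaves G v 1`:
it agrees with `f` on (the images of) old edges and takes the value `y` on the new
pendant edge. -/
noncomputable def extendLeaf {V : Type*} [Fintype V] [DecidableEq V]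
    (G : SimpleGraph V) [DecidableRel G.Adj] (v : V) (f : G.edgeSet → ℝ) (y : ℝ) :
    (addLeaves G v 1).edgeSet → ℝ := fun e =>
  if h : ∃ e₀ : G.edgeSet, Sym2.map Sum.inl (e₀ : Sym2 V) = (e : Sym2 (V ⊕ Fin 1))
  then f h.choose else y

/-!
For every graph, `⟨f, R f⟩ = ∑_z (S_z(f)² - 2 A_z(f)) / d_z`, because `R_{e,e'}` is `∓ ∑ 1/d_z`
over the common endpoints `z` of `e` and `e'`. Attaching a pendant edge with value `y` at `v`
changes only the term of `v` (`d → d + 1`, `S_v → S_v + y`, `A_v → A_v + y²`) and adds the term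
`-y²` of the new leaf. Hence `⟨f_y, R' f_y⟩ - μ ⟨f_y, f_y⟩` is a concave quadratic in `y`, maximal
at `y = S_v / K` with `K = d + 2 + μ(d + 1) > 0`, where it equals
`(2 K A_v - S_v² (2 + μ(d + 1))) / (d (d + 1) K)`; the criterion says exactly that this is `≥ 0`.
-/

lemma sum_sum_ite_eq_neg_one_mul {ι : Type*} [Fintype ι] [DecidableEq ι] (g : ι → ℝ) :
    ∑ i, ∑ j, (if i = j then (-1 : ℝ) else 1) * (g i * g j) =
      (∑ i, g i) ^ 2 - 2 * ∑ i, g i ^ 2 := by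
  have hsign : ∀ i j : ι, (if i = j then (-1 : ℝ) else 1) * (g i * g j) =
      g i * g j - if i = j then 2 * g i ^ 2 else 0 := by
    intro i j
    split_ifs with h
    · subst h; ring
    · ring
  simp only [hsign, Finset.sum_sub_distrib, Finset.sum_ite_eq, Finset.mem_univ, if_true,
    ← Finset.mul_sum, ← Finset.sum_mul, sq]

lemma sum_eq_sum_add_sub_of_forall_ne {ι M : Type*} [Fintype ι] [DecidableEq ι] [AddCommGroup M]
    {f g : ι → M} (i : ι) (h : ∀ x ≠ i, f x = g x) :
    ∑ x, f x = ∑ x, g x + (f i - g i) := by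
  rw [← Finset.add_sum_erase _ f (Finset.mem_univ i),
    ← Finset.add_sum_erase _ g (Finset.mem_univ i), Finset.sum_congr rfl fun x hx => h x (Finset.ne_of_mem_erase hx)]
  abel

section VertexSum

variable {V : Type*} [Fintype V] [DecidableEq V] (G : SimpleGraph V) [DecidableRel G.Adj]

/-- `S_z(f)` in the notation of the paper; `A_z(f)` is `vertexSum G (f ^ 2) z`. -/
def vertexSum (f : G.edgeSet → ℝ) (z : V) : ℝ :=
  ∑ e : G.edgeSet, if z ∈ (e : Sym2 V) then f e else 0

lemma dotProduct_ricciMatrix_mulVec (f : G.edgeSet → ℝ) :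
    f ⬝ᵥ (ricciMatrix G).mulVec f =
      ∑ z : V, (G.degree z : ℝ)⁻¹ * (vertexSum G f z ^ 2 - 2 * vertexSum G (f ^ 2) z) := by
  set g : V → G.edgeSet → ℝ := fun z e => if z ∈ (e : Sym2 V) then f e else 0
  have hentry : ∀ e e', f e * (ricciMatrix G e e' * f e') =
      ∑ z, (G.degree z : ℝ)⁻¹ * ((if e = e' then (-1 : ℝ) else 1) * (g z e * g z e')) := by
    intro e e'
    simp only [ricciMatrix, Finset.mul_sum, Finset.sum_mul, g]
    refine Finset.sum_congr rfl fun z _ => ?_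
    rw [ite_zero_mul_ite_zero]
    split_ifs <;> ring
  have hsq : ∀ z, ∑ e, g z e ^ 2 = vertexSum G (f ^ 2) z := fun z =>
    Finset.sum_congr rfl fun e _ => by simp [g, ite_pow]
  calc f ⬝ᵥ (ricciMatrix G).mulVec f
      = ∑ e, ∑ e', ∑ z, (G.degree z : ℝ)⁻¹ *
          ((if e = e' then (-1 : ℝ) else 1) * (g z e * g z e')) := by
        simp only [dotProduct, mulVec, Finset.mul_sum, hentry]
    _ = ∑ z, (G.degree z : ℝ)⁻¹ *
          ∑ e, ∑ e', (if e = e' then (-1 : ℝ) else 1) * (g z e * g z e') := by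
        simp only [Finset.mul_sum]
        exact (Finset.sum_congr rfl fun _ _ => Finset.sum_comm).trans Finset.sum_comm
    _ = _ := by simp only [sum_sum_ite_eq_neg_one_mul, hsq]; rfl

lemma degree_pos_of_vertexSum_ne_zero {f : G.edgeSet → ℝ} {v : V} (hf : vertexSum G f v ≠ 0) :
    0 < G.degree v := by
  obtain ⟨e, -, he⟩ := Finset.exists_ne_zero_of_sum_ne_zero hf
  have hv : v ∈ (e : Sym2 V) := by_contra fun hv => he (if_neg hv)
  rw [← card_incidenceFinset_eq_degree, Finset.card_pos]
  exact ⟨e, (mem_incidenceFinset _ _ _).2 ⟨e.2, hv⟩⟩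

end VertexSum

noncomputable def leafGain (d S A y : ℝ) : ℝ :=
  (d + 1)⁻¹ * ((S + y) ^ 2 - 2 * (A + y ^ 2)) - d⁻¹ * (S ^ 2 - 2 * A) - y ^ 2

lemma mul_sq_le_leafGain {μ d S A : ℝ} (hd : 0 < d) (hA : 0 < A) (hμ : -1 ≤ μ)
    (hcrit : S ^ 2 / A * (2 + μ * (d + 1)) ≤ 2 * (d + 2 + μ * (d + 1))) :
    μ * (S / (d + 2 + μ * (d + 1))) ^ 2 ≤ leafGain d S A (S / (d + 2 + μ * (d + 1))) := by
  set K := d + 2 + μ * (d + 1)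
  have hKpos : 0 < K := by nlinarith
  have hcrit' : S ^ 2 * (2 + μ * (d + 1)) ≤ 2 * K * A := by
    rwa [div_mul_eq_mul_div, div_le_iff₀ hA] at hcrit
  have hgain : leafGain d S A (S / K) - μ * (S / K) ^ 2 =
      (2 * K * A - S ^ 2 * (2 + μ * (d + 1))) / (d * (d + 1) * K) := by
    unfold leafGain
    field_simp
    ring
  have : 0 ≤ (2 * K * A - S ^ 2 * (2 + μ * (d + 1))) / (d * (d + 1) * K) :=
    div_nonneg (by linarith) (by positivity)
  linarith

section AddLeaves

variable {V : Type*} (G : SimpleGraph V) (v : V) (k : ℕ)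

section Degree

variable [Fintype V] [DecidableEq V] [DecidableRel G.Adj]

lemma addLeaves_degree_inl (x : V) :
    (addLeaves G v k).degree (Sum.inl x) = G.degree x + if x = v then k else 0 := by
  simp only [← card_neighborFinset_eq_degree, neighborFinset_eq_filter, Finset.card_filter,
    Fintype.sum_sum_type]
  congr 1
  split_ifs with hx <;> simp [addLeaves, addLeavesAdj, hx]

lemma addLeaves_degree_inr (i : Fin k) : (addLeaves G v k).degree (Sum.inr i) = 1 := by
  rw [← card_neighborFinset_eq_degree, Finset.card_eq_one]
  refine ⟨Sum.inl v, Finset.ext fun w => ?_⟩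
  rw [mem_neighborFinset, Finset.mem_singleton]
  rcases w with w | j <;> simp [addLeaves, addLeavesAdj]

end Degree

namespace addLeaves

def oldEdge (e : G.edgeSet) : (addLeaves G v k).edgeSet :=
  ⟨Sym2.map Sum.inl e, by
    induction e using Subtype.rec with
    | _ e he => induction e using Sym2.ind with
      | _ x y => exact he⟩

def newEdge (i : Fin k) : (addLeaves G v k).edgeSet :=
  ⟨s(Sum.inl v, Sum.inr i), rfl⟩

variable {G v k}

lemma inl_mem_oldEdge {x : V} {e : G.edgeSet} :
    Sum.inl x ∈ (oldEdge G v k e : Sym2 (V ⊕ Fin k)) ↔ x ∈ (e : Sym2 V) := by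
  simp [oldEdge, Sym2.mem_map]

lemma inr_not_mem_oldEdge (i : Fin k) (e : G.edgeSet) :
    Sum.inr i ∉ (oldEdge G v k e : Sym2 (V ⊕ Fin k)) := by
  simp [oldEdge, Sym2.mem_map]

lemma mem_newEdge {w : V ⊕ Fin k} {i : Fin k} :
    w ∈ (newEdge G v k i : Sym2 (V ⊕ Fin k)) ↔ w = Sum.inl v ∨ w = Sum.inr i :=
  Sym2.mem_iff

variable (G v k)

lemma bijective_sumElim_oldEdge_newEdge :
    Function.Bijective (Sum.elim (oldEdge G v k) (newEdge G v k)) := by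
  constructor
  · rintro (e | i) (e' | i') h <;> simp only [Sum.elim_inl, Sum.elim_inr] at h
    · exact congrArg Sum.inl (Subtype.ext
        (Sym2.map.injective Sum.inl_injective (congrArg Subtype.val h)))
    · exact absurd (h ▸ mem_newEdge.2 (Or.inr rfl)) (inr_not_mem_oldEdge i' e)
    · exact absurd (h ▸ mem_newEdge.2 (Or.inr rfl)) (inr_not_mem_oldEdge i e')
    · have : Sum.inr i ∈ (newEdge G v k i' : Sym2 (V ⊕ Fin k)) := h ▸ mem_newEdge.2 (Or.inr rfl)
      simpa [mem_newEdge] using this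
  · rintro ⟨s, hs⟩
    induction s using Sym2.ind with
    | _ a b =>
      rcases a with a | i <;> rcases b with b | j
      · exact ⟨Sum.inl ⟨s(a, b), hs⟩, rfl⟩
      · obtain rfl : a = v := hs
        exact ⟨Sum.inr j, rfl⟩
      · obtain rfl : b = v := hs
        exact ⟨Sum.inr i, Subtype.ext Sym2.eq_swap⟩
      · exact hs.elim

variable [Fintype V] [DecidableEq V] [DecidableRel G.Adj]

lemma sum_edgeSet {M : Type*} [AddCommMonoid M] (h : (addLeaves G v k).edgeSet → M) :
    ∑ E, h E = ∑ e, h (oldEdge G v k e) + ∑ i, h (newEdge G v k i) := by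
  rw [← (Equiv.ofBijective _ (bijective_sumElim_oldEdge_newEdge G v k)).sum_comp,
    Fintype.sum_sum_type]
  rfl

lemma vertexSum_inl (h : (addLeaves G v k).edgeSet → ℝ) (x : V) :
    vertexSum (addLeaves G v k) h (Sum.inl x) =
      vertexSum G (h ∘ oldEdge G v k) x + if x = v then ∑ i, h (newEdge G v k i) else 0 := by
  simp only [vertexSum, sum_edgeSet, inl_mem_oldEdge, mem_newEdge, Sum.inl.injEq, reduceCtorEq,
    or_false, Function.comp_apply, Finset.ite_sum_zero]

lemma vertexSum_inr (h : (addLeaves G v k).edgeSet → ℝ) (i : Fin k) :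
    vertexSum (addLeaves G v k) h (Sum.inr i) = h (newEdge G v k i) := by
  simp [vertexSum, sum_edgeSet, inr_not_mem_oldEdge, mem_newEdge]

end addLeaves
end AddLeaves

namespace addLeaves

variable {V : Type*} [Fintype V] [DecidableEq V] {G : SimpleGraph V} [DecidableRel G.Adj]
  {v : V} (f : G.edgeSet → ℝ) (y : ℝ)

lemma extendLeaf_oldEdge (e : G.edgeSet) : extendLeaf G v f y (oldEdge G v 1 e) = f e := by
  have h : ∃ e₀ : G.edgeSet, Sym2.map Sum.inl (e₀ : Sym2 V) =
      ((oldEdge G v 1 e : (addLeaves G v 1).edgeSet) : Sym2 (V ⊕ Fin 1)) := ⟨e, rfl⟩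
  rw [extendLeaf, dif_pos h]
  exact congrArg f (Subtype.ext (Sym2.map.injective Sum.inl_injective h.choose_spec))

lemma extendLeaf_comp_oldEdge : extendLeaf G v f y ∘ oldEdge G v 1 = f :=
  funext (extendLeaf_oldEdge f y)

lemma extendLeaf_newEdge (i : Fin 1) : extendLeaf G v f y (newEdge G v 1 i) = y := by
  rw [extendLeaf, dif_neg]
  rintro ⟨e₀, he⟩
  have := inr_not_mem_oldEdge (v := v) i e₀
  rw [oldEdge, Subtype.coe_mk, he] at this
  exact this (mem_newEdge.2 (Or.inr rfl))

lemma dotProduct_extendLeaf_self :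
    extendLeaf G v f y ⬝ᵥ extendLeaf G v f y = f ⬝ᵥ f + y ^ 2 := by
  simp only [dotProduct, sum_edgeSet, extendLeaf_oldEdge, extendLeaf_newEdge, Fin.sum_univ_one, sq]

lemma dotProduct_ricciMatrix_extendLeaf :
    extendLeaf G v f y ⬝ᵥ (ricciMatrix (addLeaves G v 1)).mulVec (extendLeaf G v f y) =
      f ⬝ᵥ (ricciMatrix G).mulVec f
        + leafGain (G.degree v) (vertexSum G f v) (vertexSum G (f ^ 2) v) y := by
  rw [dotProduct_ricciMatrix_mulVec, dotProduct_ricciMatrix_mulVec, Fintype.sum_sum_type]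
  simp only [vertexSum_inl, vertexSum_inr, addLeaves_degree_inl, addLeaves_degree_inr,
    Pi.pow_comp, extendLeaf_comp_oldEdge, Pi.pow_apply, extendLeaf_newEdge, Fin.sum_univ_one]
  rw [sum_eq_sum_add_sub_of_forall_ne (g := fun z =>
      (G.degree z : ℝ)⁻¹ * (vertexSum G f z ^ 2 - 2 * vertexSum G (f ^ 2) z)) v
      fun x hx => by simp [hx]]
  push_cast
  simp only [if_true]
  unfold leafGain
  ring

end addLeaves

theorem rho_sharp_criterion_general {V : Type*} [Fintype V] [DecidableEq V]
    (G : SimpleGraph V) [DecidableRel G.Adj]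
    (v : V) (f : G.edgeSet → ℝ)
    (hunit : f ⬝ᵥ f = 1)
    (hA : 0 < ∑ e : G.edgeSet, if v ∈ (e : Sym2 V) then (f e) ^ 2 else 0)
    (hmu : -1 ≤ f ⬝ᵥ (ricciMatrix G).mulVec f)
    (hcrit :
      (∑ e : G.edgeSet, if v ∈ (e : Sym2 V) then f e else 0) ^ 2 /
          (∑ e : G.edgeSet, if v ∈ (e : Sym2 V) then (f e) ^ 2 else 0) *
          (2 + (f ⬝ᵥ (ricciMatrix G).mulVec f) * ((G.degree v : ℝ) + 1)) ≤
        2 * ((G.degree v : ℝ) + 2 +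
          (f ⬝ᵥ (ricciMatrix G).mulVec f) * ((G.degree v : ℝ) + 1))) :
    ∃ y : ℝ,
      f ⬝ᵥ (ricciMatrix G).mulVec f ≤
        ((extendLeaf G v f y) ⬝ᵥ
            (ricciMatrix (addLeaves G v 1)).mulVec (extendLeaf G v f y)) /
          ((extendLeaf G v f y) ⬝ᵥ (extendLeaf G v f y)) := by
  change 0 < vertexSum G (f ^ 2) v at hA
  change vertexSum G f v ^ 2 / vertexSum G (f ^ 2) v * _ ≤ _ at hcrit
  set μ := f ⬝ᵥ (ricciMatrix G).mulVec f
  have hd : (0 : ℝ) < G.degree v := Nat.cast_pos.2 (degree_pos_of_vertexSum_ne_zero G hA.ne')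
  refine ⟨vertexSum G f v / (G.degree v + 2 + μ * (G.degree v + 1)), ?_⟩
  rw [addLeaves.dotProduct_ricciMatrix_extendLeaf, addLeaves.dotProduct_extendLeaf_self, hunit,
    le_div_iff₀ (by positivity)]
  linarith [mul_sq_le_leafGain hd hA hmu hcrit]

/-- ρ_v-sharp criterion: if `f` is a unit vector on `T` with `μ = ⟨f, R_T f⟩ ≥ -1`,
`A_v(f) > 0`, `ρ_v = S_v(f)²/A_v(f)`, and `2(d+2+μ(d+1)) ≥ ρ_v(2+μ(d+1))`, then some
extension `f_y` to the tree `T'` (obtained by attaching one pendant edge at `v`)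
satisfies `⟨f_y, R_{T'} f_y⟩/⟨f_y, f_y⟩ ≥ μ`. -/
theorem rho_sharp_criterion {V : Type*} [Fintype V] [DecidableEq V]
    (G : SimpleGraph V) [DecidableRel G.Adj]
    (hT : G.IsTree) (h1 : 1 ≤ G.edgeFinset.card) (v : V) (f : G.edgeSet → ℝ)
    (hunit : f ⬝ᵥ f = 1)
    (hA : 0 < ∑ e : G.edgeSet, if v ∈ (e : Sym2 V) then (f e) ^ 2 else 0)
    (hmu : -1 ≤ f ⬝ᵥ (ricciMatrix G).mulVec f)
    (hcrit :
      (∑ e : G.edgeSet, if v ∈ (e : Sym2 V) then f e else 0) ^ 2 /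
          (∑ e : G.edgeSet, if v ∈ (e : Sym2 V) then (f e) ^ 2 else 0) *
          (2 + (f ⬝ᵥ (ricciMatrix G).mulVec f) * ((G.degree v : ℝ) + 1)) ≤
        2 * ((G.degree v : ℝ) + 2 +
          (f ⬝ᵥ (ricciMatrix G).mulVec f) * ((G.degree v : ℝ) + 1))) :
    ∃ y : ℝ,
      f ⬝ᵥ (ricciMatrix G).mulVec f ≤
        ((extendLeaf G v f y) ⬝ᵥ
            (ricciMatrix (addLeaves G v 1)).mulVec (extendLeaf G v f y)) /
          ((extendLeaf G v f y) ⬝ᵥ (extendLeaf G v f y)) :=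
  rho_sharp_criterion_general G v f hunit hA hmu hcrit
end

section
/- Let T be a finite tree with at least two edges, v a vertex of T with degree d = d_T(v), and T' the tree obtained from T by attaching one new pendant edge at v. Let f be a unit eigenvector of R_T with eigenvalue λ_max(R_T) whose entries are all positive, and set ρ_v = S_v(f)²/A_v(f) with S_v(f) = Σ_{e ∋ v} f_e and A_v(f) = Σ_{e ∋ v} f_e². If 2(d + 2 + λ_max(R_T)(d+1)) ≥ ρ_v (2 + λ_max(R_T)(d+1)), then λ_max(R_{T'}) ≥ λ_max(R_T). -/
open SimpleGraph Matrix Finset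

/-!
Test the Rayleigh quotient of `R_{T'}` at the vector `f_y` that extends `f` by a value `y` on the
new edge. The quadratic form of a Ricci matrix is `∑_z (S_z(g)² - 2 A_z(g)) / d_z`, so attaching
the leaf only changes the terms of `v` and of the new vertex: `f_yᵀ R_{T'} f_y = λ + q(y)` with
`‖f_y‖² = 1 + y²`, where `q` is an explicit quadratic in `y`. After clearing denominators, the
criterion on `ρ_v` says precisely that the discriminant of `q(y) - λ y²` is nonnegative, so some
`y` makes `f_yᵀ R_{T'} f_y ≥ λ (1 + y²)`, and `λ_max(R_{T'}) ≥ λ` follows.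
-/

section Spectral

variable {n : Type*} [Fintype n] [DecidableEq n]

theorem lambdaMax_eq_sSup_spectrum (M : Matrix n n ℝ) : lambdaMax M = sSup (spectrum ℝ M) := by
  rw [lambdaMax, ← spectrum_toLin']
  congr 1
  ext μ
  simp only [← Module.End.hasEigenvalue_iff_mem_spectrum, Module.End.hasEigenvalue_iff,
    Submodule.ne_bot_iff, Module.End.mem_eigenspace_iff, toLin'_apply, and_comm, Set.mem_ofPred_eq]

theorem le_lambdaMax_of_mem_spectrum {M : Matrix n n ℝ} {μ : ℝ} (hμ : μ ∈ spectrum ℝ M) :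
    μ ≤ lambdaMax M := by
  rw [lambdaMax_eq_sSup_spectrum]
  exact le_csSup finite_real_spectrum.bddAbove hμ

theorem posSemidef_lambdaMax_sub {M : Matrix n n ℝ} (hM : M.IsHermitian) :
    (algebraMap ℝ (Matrix n n ℝ) (lambdaMax M) - M).PosSemidef := by
  refine posSemidef_iff_isHermitian_and_spectrum_nonneg.2 ⟨?_, ?_⟩
  · rw [algebraMap_eq_diagonal]
    exact (isHermitian_diagonal _).sub hM
  · rw [← spectrum.singleton_sub_eq]
    rintro _ ⟨_, rfl, μ, hμ, rfl⟩
    exact sub_nonneg.2 (le_lambdaMax_of_mem_spectrum hμ)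

theorem dotProduct_mulVec_le_lambdaMax_mul {M : Matrix n n ℝ} (hM : M.IsHermitian)
    (g : n → ℝ) :
    g ⬝ᵥ M *ᵥ g ≤ lambdaMax M * (g ⬝ᵥ g) := by
  have h := (posSemidef_lambdaMax_sub hM).dotProduct_mulVec_nonneg g
  rwa [Algebra.algebraMap_eq_smul_one, sub_mulVec, smul_mulVec, one_mulVec, dotProduct_sub,
    dotProduct_smul, star_trivial, smul_eq_mul, sub_nonneg] at h

end Spectral

theorem exists_quadratic_nonpos {d B S A : ℝ} (hd : 0 < d) (hA : 0 < A)
    (hcrit : S ^ 2 / A * (B - d) ≤ 2 * B) :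
    ∃ y, d * B * y ^ 2 - 2 * d * S * y + S ^ 2 - 2 * A ≤ 0 := by
  rcases lt_or_ge 0 B with hB | hB
  · refine ⟨S / B, ?_⟩
    rw [div_mul_eq_mul_div, div_le_iff₀ hA] at hcrit
    have hvalue : d * B * (S / B) ^ 2 - 2 * d * S * (S / B) = -(d * S ^ 2 / B) := by
      field_simp
      ring
    have hbound : S ^ 2 - 2 * A ≤ d * S ^ 2 / B := by
      rw [le_div_iff₀ hB]
      linarith
    linarith
  · refine ⟨S / d, ?_⟩
    have hvalue : d * B * (S / d) ^ 2 - 2 * d * S * (S / d) = B * S ^ 2 / d - 2 * S ^ 2 := by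
      field_simp
    have hbound : B * S ^ 2 / d ≤ 0 :=
      div_nonpos_of_nonpos_of_nonneg (mul_nonpos_of_nonpos_of_nonneg hB (sq_nonneg S)) hd.le
    linarith [sq_nonneg S]

theorem exists_mul_sq_le_leafGain {d S A μ : ℝ} (hd : 0 < d) (hA : 0 < A)
    (hcrit : S ^ 2 / A * (2 + μ * (d + 1)) ≤ 2 * (d + 2 + μ * (d + 1))) :
    ∃ y, μ * y ^ 2 ≤ leafGain d S A y := by
  set B := d + 2 + μ * (d + 1)
  obtain ⟨y, hy⟩ := exists_quadratic_nonpos (B := B) hd hA (by convert hcrit using 2; ring)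
  refine ⟨y, ?_⟩
  have hgain : leafGain d S A y - μ * y ^ 2 =
      -(d * B * y ^ 2 - 2 * d * S * y + S ^ 2 - 2 * A) / (d * (d + 1)) := by
    rw [leafGain]
    field_simp
    ring
  have : 0 ≤ -(d * B * y ^ 2 - 2 * d * S * y + S ^ 2 - 2 * A) / (d * (d + 1)) :=
    div_nonneg (by linarith) (by positivity)
  linarith

namespace SimpleGraph

section Incidence

variable {V : Type*} [Fintype V] [DecidableEq V] (G : SimpleGraph V) [DecidableRel G.Adj]

/-- `S_z(g) = G.incidentSum g z` and `A_z(g) = G.incidentSum (g · ^ 2) z`. -/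
def incidentSum (g : G.edgeSet → ℝ) (z : V) : ℝ :=
  ∑ e : G.edgeSet, if z ∈ (e : Sym2 V) then g e else 0

theorem incidentSum_one (z : V) : G.incidentSum (fun _ => 1) z = G.degree z := by
  rw [incidentSum, Finset.sum_boole, ← card_incidenceSet_eq_degree, ← Fintype.card_subtype]
  norm_cast
  exact Fintype.card_congr (Equiv.subtypeSubtypeEquivSubtypeInter (· ∈ G.edgeSet) (z ∈ ·))

variable {G}

theorem incidentSum_sq_nonneg (g : G.edgeSet → ℝ) (z : V) :
    0 ≤ G.incidentSum (fun e => g e ^ 2) z :=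
  sum_nonneg fun e _ => by split_ifs <;> positivity

theorem incidentSum_eq_zero_of_incidentSum_sq_eq_zero {g : G.edgeSet → ℝ} {z : V}
    (h : G.incidentSum (fun e => g e ^ 2) z = 0) : G.incidentSum g z = 0 := by
  rw [incidentSum, sum_eq_zero_iff_of_nonneg fun e _ => by split_ifs <;> positivity] at h
  refine sum_eq_zero fun e he => ?_
  have he := h e he
  split_ifs at he ⊢
  · exact pow_eq_zero_iff two_ne_zero |>.1 he
  · rfl

theorem degree_pos_of_incidentSum_ne_zero {g : G.edgeSet → ℝ} {z : V}
    (h : G.incidentSum g z ≠ 0) : (0 : ℝ) < G.degree z := by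
  obtain ⟨e, -, he⟩ := exists_ne_zero_of_sum_ne_zero h
  have hz : z ∈ (e : Sym2 V) := by_contra fun hz => he (if_neg hz)
  rw [← incidentSum_one]
  exact sum_pos' (fun e _ => by positivity) ⟨e, mem_univ e, by simp [hz]⟩

variable (G)

theorem isHermitian_ricciMatrix : (ricciMatrix G).IsHermitian := by
  ext e e'
  simp only [conjTranspose_apply, star_trivial, ricciMatrix, eq_comm (a := e), and_comm]

theorem dotProduct_ricciMatrix_mulVec (g : G.edgeSet → ℝ) :
    g ⬝ᵥ ricciMatrix G *ᵥ g = ∑ z, (G.degree z : ℝ)⁻¹ *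
      (G.incidentSum g z ^ 2 - 2 * G.incidentSum (fun e => g e ^ 2) z) := by
  have hterm (e e' : G.edgeSet) : g e * (ricciMatrix G e e' * g e') =
      ∑ z, (G.degree z : ℝ)⁻¹ * ((if z ∈ (e : Sym2 V) then g e else 0) *
        (if z ∈ (e' : Sym2 V) then g e' else 0) -
          2 * if e = e' then (if z ∈ (e : Sym2 V) then g e ^ 2 else 0) else 0) := by
    simp only [ricciMatrix, Finset.sum_mul, Finset.mul_sum]
    refine Finset.sum_congr rfl fun z _ => ?_
    rcases eq_or_ne e e' with rfl | h
    · by_cases he : z ∈ (e : Sym2 V) <;> simp only [he, and_self, if_true, if_false] <;> ring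
    · by_cases he : z ∈ (e : Sym2 V) <;> by_cases he' : z ∈ (e' : Sym2 V) <;>
        simp only [h, he, he', and_self, and_true, and_false, if_true, if_false] <;> ring
  simp only [dotProduct, mulVec, Finset.mul_sum, hterm]
  rw [Finset.sum_congr rfl fun e _ => Finset.sum_comm, Finset.sum_comm]
  refine Finset.sum_congr rfl fun z _ => ?_
  simp only [← Finset.mul_sum, Finset.sum_sub_distrib, Finset.sum_ite_eq, Finset.mem_univ,
    if_true, incidentSum, sq, Finset.sum_mul_sum]

end Incidence

section AddLeaf

variable {V : Type*} (G : SimpleGraph V) (v : V)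

def inlEmbedding : G ↪g addLeaves G v 1 := ⟨Function.Embedding.inl, Iff.rfl⟩

def liftEdge : G.edgeSet ↪ (addLeaves G v 1).edgeSet := (G.inlEmbedding v).mapEdgeSet

def newEdge : (addLeaves G v 1).edgeSet :=
  ⟨s(.inl v, .inr 0), (addLeaves G v 1).mem_edgeSet.2 rfl⟩

variable {G v}

theorem inl_mem_liftEdge {w : V} {e : G.edgeSet} :
    (.inl w : V ⊕ Fin 1) ∈ (G.liftEdge v e : Sym2 (V ⊕ Fin 1)) ↔ w ∈ (e : Sym2 V) := by
  simp [liftEdge, Hom.mapEdgeSet, inlEmbedding, Sym2.mem_map]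

theorem inr_notMem_liftEdge {i : Fin 1} {e : G.edgeSet} :
    (.inr i : V ⊕ Fin 1) ∉ (G.liftEdge v e : Sym2 (V ⊕ Fin 1)) := by
  simp [liftEdge, Hom.mapEdgeSet, inlEmbedding, Sym2.mem_map]

theorem inl_mem_newEdge {w : V} :
    (.inl w : V ⊕ Fin 1) ∈ (G.newEdge v : Sym2 (V ⊕ Fin 1)) ↔ w = v := by
  simp [newEdge]

theorem inr_mem_newEdge (i : Fin 1) :
    (.inr i : V ⊕ Fin 1) ∈ (G.newEdge v : Sym2 (V ⊕ Fin 1)) := by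
  simp [newEdge, Fin.fin_one_eq_zero i]

theorem liftEdge_ne_newEdge (e : G.edgeSet) : G.liftEdge v e ≠ G.newEdge v :=
  fun h => inr_notMem_liftEdge (h ▸ inr_mem_newEdge 0)

theorem eq_newEdge_or_exists_liftEdge (E : (addLeaves G v 1).edgeSet) :
    E = G.newEdge v ∨ ∃ e, G.liftEdge v e = E := by
  obtain ⟨E, hE⟩ := E
  induction E using Sym2.ind with
  | _ x y =>
    have hxy : (addLeaves G v 1).Adj x y := hE
    rcases x with x | i <;> rcases y with y | j
    · exact .inr ⟨⟨s(x, y), hxy⟩, rfl⟩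
    · obtain rfl : x = v := hxy
      simp [newEdge, Fin.fin_one_eq_zero j]
    · obtain rfl : y = v := hxy
      simp [newEdge, Fin.fin_one_eq_zero i, Sym2.eq_swap]
    · exact hxy.elim

variable [Fintype V] [DecidableEq V] [DecidableRel G.Adj]

theorem sum_edgeSet_addLeaves (F : (addLeaves G v 1).edgeSet → ℝ) :
    ∑ E, F E = F (G.newEdge v) + ∑ e, F (G.liftEdge v e) := by
  have huniv : (univ : Finset (addLeaves G v 1).edgeSet) =
      insert (G.newEdge v) (univ.map (G.liftEdge v)) := by
    ext E
    rcases eq_newEdge_or_exists_liftEdge E with rfl | ⟨e, rfl⟩ <;> simp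
  rw [huniv, sum_insert (by simpa using fun e => liftEdge_ne_newEdge e), sum_map]

theorem incidentSum_addLeaves_inl (h : (addLeaves G v 1).edgeSet → ℝ) (w : V) :
    (addLeaves G v 1).incidentSum h (.inl w) =
      G.incidentSum (fun e => h (G.liftEdge v e)) w + if w = v then h (G.newEdge v) else 0 := by
  simp only [incidentSum, sum_edgeSet_addLeaves, inl_mem_liftEdge, inl_mem_newEdge, add_comm]

theorem incidentSum_addLeaves_inr (h : (addLeaves G v 1).edgeSet → ℝ) (i : Fin 1) :
    (addLeaves G v 1).incidentSum h (.inr i) = h (G.newEdge v) := by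
  simp [incidentSum, sum_edgeSet_addLeaves, inr_notMem_liftEdge, inr_mem_newEdge]

theorem degree_addLeaves_inl (w : V) :
    ((addLeaves G v 1).degree (.inl w) : ℝ) = G.degree w + if w = v then 1 else 0 := by
  rw [← incidentSum_one, incidentSum_addLeaves_inl, incidentSum_one]

theorem degree_addLeaves_inr (i : Fin 1) : ((addLeaves G v 1).degree (.inr i) : ℝ) = 1 := by
  rw [← incidentSum_one, incidentSum_addLeaves_inr]

theorem extendLeaf_liftEdge (f : G.edgeSet → ℝ) (y : ℝ) (e : G.edgeSet) :
    extendLeaf G v f y (G.liftEdge v e) = f e := by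
  have h : ∃ e₀ : G.edgeSet,
      Sym2.map Sum.inl (e₀ : Sym2 V) = (G.liftEdge v e : Sym2 (V ⊕ Fin 1)) := ⟨e, rfl⟩
  rw [extendLeaf, dif_pos h]
  exact congrArg f (Subtype.ext (Sym2.map.injective Sum.inl_injective h.choose_spec))

theorem extendLeaf_newEdge (f : G.edgeSet → ℝ) (y : ℝ) :
    extendLeaf G v f y (G.newEdge v) = y := by
  rw [extendLeaf, dif_neg]
  rintro ⟨e₀, he₀⟩
  exact inr_notMem_liftEdge (e := e₀) (v := v) (he₀ ▸ inr_mem_newEdge 0)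

theorem dotProduct_extendLeaf (f : G.edgeSet → ℝ) (y : ℝ) :
    extendLeaf G v f y ⬝ᵥ extendLeaf G v f y = f ⬝ᵥ f + y ^ 2 := by
  simp only [dotProduct, sum_edgeSet_addLeaves, extendLeaf_liftEdge, extendLeaf_newEdge]
  ring

theorem extendLeaf_dotProduct_ricciMatrix_mulVec (f : G.edgeSet → ℝ) (y : ℝ) :
    extendLeaf G v f y ⬝ᵥ ricciMatrix (addLeaves G v 1) *ᵥ extendLeaf G v f y =
      f ⬝ᵥ ricciMatrix G *ᵥ f +
        leafGain (G.degree v) (G.incidentSum f v) (G.incidentSum (fun e => f e ^ 2) v) y := by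
  simp only [dotProduct_ricciMatrix_mulVec, Fintype.sum_sum_type, Fin.sum_univ_one,
    incidentSum_addLeaves_inl, incidentSum_addLeaves_inr, degree_addLeaves_inl,
    degree_addLeaves_inr, extendLeaf_liftEdge, extendLeaf_newEdge]
  set S := G.incidentSum f
  set A := G.incidentSum (fun e => f e ^ 2)
  have hvertex (w : V) :
      ((G.degree w : ℝ) + if w = v then 1 else 0)⁻¹ * ((S w + if w = v then y else 0) ^ 2 -
          2 * (A w + if w = v then y ^ 2 else 0)) =
        (G.degree w : ℝ)⁻¹ * (S w ^ 2 - 2 * A w) +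
          if w = v then ((G.degree v : ℝ) + 1)⁻¹ * ((S v + y) ^ 2 - 2 * (A v + y ^ 2)) -
            (G.degree v : ℝ)⁻¹ * (S v ^ 2 - 2 * A v) else 0 := by
    split_ifs with hw
    · subst hw; ring
    · simp
  rw [sum_congr rfl fun w _ => hvertex w, sum_add_distrib, sum_ite_eq', leafGain,
    if_pos (mem_univ v)]
  ring

end AddLeaf

end SimpleGraph

theorem lambdaMax_mono_of_rho_criterion_general {V : Type*} [Fintype V] [DecidableEq V]
    (G : SimpleGraph V) [DecidableRel G.Adj]
    (v : V) (f : G.edgeSet → ℝ)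
    (hunit : f ⬝ᵥ f = 1)
    (heig : (ricciMatrix G).mulVec f = lambdaMax (ricciMatrix G) • f)
    (hcrit :
      (∑ e : G.edgeSet, if v ∈ (e : Sym2 V) then f e else 0) ^ 2 /
          (∑ e : G.edgeSet, if v ∈ (e : Sym2 V) then (f e) ^ 2 else 0) *
          (2 + lambdaMax (ricciMatrix G) * ((G.degree v : ℝ) + 1)) ≤
        2 * ((G.degree v : ℝ) + 2 +
          lambdaMax (ricciMatrix G) * ((G.degree v : ℝ) + 1))) :
    lambdaMax (ricciMatrix G) ≤ lambdaMax (ricciMatrix (addLeaves G v 1)) := by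
  set μ := lambdaMax (ricciMatrix G)
  obtain ⟨y, hy⟩ : ∃ y, μ * y ^ 2 ≤
      leafGain (G.degree v) (G.incidentSum f v) (G.incidentSum (fun e => f e ^ 2) v) y := by
    rcases (incidentSum_sq_nonneg f v).eq_or_lt with hA | hA
    · refine ⟨0, ?_⟩
      rw [← hA, incidentSum_eq_zero_of_incidentSum_sq_eq_zero hA.symm, leafGain]
      simp
    · exact exists_mul_sq_le_leafGain (degree_pos_of_incidentSum_ne_zero hA.ne') hA hcrit
  have hμ : f ⬝ᵥ ricciMatrix G *ᵥ f = μ := by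
    rw [heig, dotProduct_smul, hunit, smul_eq_mul, mul_one]
  have hray := dotProduct_mulVec_le_lambdaMax_mul (isHermitian_ricciMatrix _) (extendLeaf G v f y)
  rw [extendLeaf_dotProduct_ricciMatrix_mulVec, dotProduct_extendLeaf, hμ, hunit] at hray
  exact le_of_mul_le_mul_right (by linarith) (by positivity : (0 : ℝ) < 1 + y ^ 2)

/-- If `f` is a positive unit eigenvector of `R_T` for `λ_max(R_T)` and
`2(d+2+λ_max(d+1)) ≥ ρ_v(2+λ_max(d+1))` where `ρ_v = S_v(f)²/A_v(f)`, then attaching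
one pendant edge at `v` does not decrease the largest eigenvalue. -/
theorem lambdaMax_mono_of_rho_criterion {V : Type*} [Fintype V] [DecidableEq V]
    (G : SimpleGraph V) [DecidableRel G.Adj]
    (hT : G.IsTree) (h2 : 2 ≤ G.edgeFinset.card) (v : V) (f : G.edgeSet → ℝ)
    (hunit : f ⬝ᵥ f = 1)
    (heig : (ricciMatrix G).mulVec f = lambdaMax (ricciMatrix G) • f)
    (hpos : ∀ e : G.edgeSet, 0 < f e)
    (hcrit :
      (∑ e : G.edgeSet, if v ∈ (e : Sym2 V) then f e else 0) ^ 2 /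
          (∑ e : G.edgeSet, if v ∈ (e : Sym2 V) then (f e) ^ 2 else 0) *
          (2 + lambdaMax (ricciMatrix G) * ((G.degree v : ℝ) + 1)) ≤
        2 * ((G.degree v : ℝ) + 2 +
          lambdaMax (ricciMatrix G) * ((G.degree v : ℝ) + 1))) :
    lambdaMax (ricciMatrix G) ≤ lambdaMax (ricciMatrix (addLeaves G v 1)) :=
  lambdaMax_mono_of_rho_criterion_general G v f hunit heig hcrit
end
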